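/- Let (S, A, δ, Z, o, s₀) be a POMDP with target ⊤ ∈ S, and let δ̃ be the blind MDP transition on action set A × Z given by δ̃(s,(a,z)) := δ(s,a) if o(s) = z and the point mass at s otherwise. Let τ be a probability distribution on A × Z such that for every z ∈ Z, Σ_a τ(a,z) > 0, and define the memoryless policy σ : Z → Δ(A) by σ(z)(a) := τ(a,z) / Σ_{a'} τ(a',z). Then for every state s ∈ S, ReachProb(P_σ, ⊤, s) = ReachProb(P̃_τ, ⊤, s), where P_σ(s,s') := Σ_a σ(o s)(a) · δ(s,a)(s') and P̃_τ(s,s') := Σ_{(a,z)} τ(a,z) · δ̃(s,(a,z))(s'). -/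
import Mathlib


open scoped BigOperators

/-- Iterates whose supremum is the reachability probability. -/
noncomputable def reachAux {S : Type*} [Fintype S] [DecidableEq S]
    (P : S → S → ℝ) (t : S) : ℕ → S → ℝ
  | 0, x => if x = t then 1 else 0
  | n + 1, x => if x = t then 1 else ∑ y, P x y * reachAux P t n y

/-- Reachability probability of target `t` starting from `s` in the Markov chain `P`. -/
noncomputable def ReachProb {S : Type*} [Fintype S] [DecidableEq S]
    (P : S → S → ℝ) (t s : S) : ℝ :=
  ⨆ n : ℕ, reachAux P t n s

/-- Transition function of the blind MDP associated with a POMDP: action `(a, z)`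
behaves like `a` on states with observation `z` and is a self-loop elsewhere. -/
noncomputable def blindTrans {S A Z : Type*} [DecidableEq S] [DecidableEq Z]
    (δ : S → A → S → ℝ) (o : S → Z) : S → A × Z → S → ℝ :=
  fun s p s' => if o s = p.2 then δ s p.1 s' else if s' = s then 1 else 0

section Aux

variable {S : Type*} [Fintype S] [DecidableEq S] (P : S → S → ℝ) (t : S)

lemma reachAux_nonneg (hP0 : ∀ x y, 0 ≤ P x y) : ∀ n x, 0 ≤ reachAux P t n x := by
  intro n
  induction n with
  | zero => intro x; simp [reachAux]; positivity
  | succ n ih =>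
    intro x
    simp only [reachAux]
    split
    · norm_num
    · exact Finset.sum_nonneg fun y _ => mul_nonneg (hP0 x y) (ih y)

lemma reachAux_le_one (hP0 : ∀ x y, 0 ≤ P x y) (hP1 : ∀ x, ∑ y, P x y = 1) :
    ∀ n x, reachAux P t n x ≤ 1 := by
  intro n
  induction n with
  | zero => intro x; simp [reachAux]; split <;> norm_num
  | succ n ih =>
    intro x
    simp only [reachAux]
    split
    · norm_num
    · calc ∑ y, P x y * reachAux P t n y ≤ ∑ y, P x y * 1 :=
            Finset.sum_le_sum fun y _ =>
              mul_le_mul_of_nonneg_left (ih y) (hP0 x y)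
        _ = 1 := by simp [hP1 x]

lemma reachAux_mono (hP0 : ∀ x y, 0 ≤ P x y) :
    ∀ n x, reachAux P t n x ≤ reachAux P t (n + 1) x := by
  intro n
  induction n with
  | zero =>
    intro x
    simp only [reachAux]
    split
    · norm_num
    · exact Finset.sum_nonneg fun y _ =>
        mul_nonneg (hP0 x y) (reachAux_nonneg P t hP0 0 y)
  | succ n ih =>
    intro x
    simp only [reachAux]
    split
    · norm_num
    · exact Finset.sum_le_sum fun y _ => mul_le_mul_of_nonneg_left (ih y) (hP0 x y)

lemma reachAux_mono' (hP0 : ∀ x y, 0 ≤ P x y) : ∀ x, Monotone fun n => reachAux P t n x := by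
  intro x
  exact monotone_nat_of_le_succ fun n => reachAux_mono P t hP0 n x

lemma reachAux_bdd (hP0 : ∀ x y, 0 ≤ P x y) (hP1 : ∀ x, ∑ y, P x y = 1) (x : S) :
    BddAbove (Set.range fun n => reachAux P t n x) :=
  ⟨1, by rintro r ⟨n, rfl⟩; exact reachAux_le_one P t hP0 hP1 n x⟩

lemma reachAux_tendsto (hP0 : ∀ x y, 0 ≤ P x y) (hP1 : ∀ x, ∑ y, P x y = 1) (x : S) :
    Filter.Tendsto (fun n => reachAux P t n x) Filter.atTop (nhds (ReachProb P t x)) :=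
  tendsto_atTop_ciSup (reachAux_mono' P t hP0 x) (reachAux_bdd P t hP0 hP1 x)

lemma ReachProb_le_aux (hP0 : ∀ x y, 0 ≤ P x y) (hP1 : ∀ x, ∑ y, P x y = 1) (n : ℕ) (x : S) :
    reachAux P t n x ≤ ReachProb P t x :=
  le_ciSup (reachAux_bdd P t hP0 hP1 x) n

lemma ReachProb_fixed (hP0 : ∀ x y, 0 ≤ P x y) (hP1 : ∀ x, ∑ y, P x y = 1) (x : S) :
    ReachProb P t x = if x = t then 1 else ∑ y, P x y * ReachProb P t y := by
  have h1 : Filter.Tendsto (fun n => reachAux P t (n + 1) x) Filter.atTop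
      (nhds (ReachProb P t x)) :=
    (reachAux_tendsto P t hP0 hP1 x).comp (Filter.tendsto_add_atTop_nat 1)
  have h2 : Filter.Tendsto (fun n => reachAux P t (n + 1) x) Filter.atTop
      (nhds (if x = t then 1 else ∑ y, P x y * ReachProb P t y)) := by
    simp only [reachAux]
    split
    · exact tendsto_const_nhds
    · exact tendsto_finset_sum _ fun y _ =>
        (reachAux_tendsto P t hP0 hP1 y).const_mul (P x y)
  exact tendsto_nhds_unique h1 h2

end Aux

/-- Core abstract lemma: blending a stochastic matrix with the identity
    (with positive weight on `P`) doesn't change reachability. -/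
lemma reach_blend {S : Type*} [Fintype S] [DecidableEq S]
    (P Q : S → S → ℝ) (t : S) (c : S → ℝ)
    (hP0 : ∀ x y, 0 ≤ P x y) (hP1 : ∀ x, ∑ y, P x y = 1)
    (hc0 : ∀ x, 0 < c x) (hc1 : ∀ x, c x ≤ 1)
    (hQ : ∀ x y, Q x y = c x * P x y + (1 - c x) * (if y = x then 1 else 0)) :
    ∀ s, ReachProb P t s = ReachProb Q t s := by
  have hQ0 : ∀ x y, 0 ≤ Q x y := by
    intro x y
    rw [hQ]
    apply add_nonneg
    · exact mul_nonneg (hc0 x).le (hP0 x y)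
    · apply mul_nonneg (by linarith [hc1 x])
      split <;> norm_num
  have hident : ∀ x : S, (∑ y, (if y = x then (1:ℝ) else 0)) = 1 := by
    intro x; simp
  have hQ1 : ∀ x, ∑ y, Q x y = 1 := by
    intro x
    simp only [hQ, Finset.sum_add_distrib, ← Finset.mul_sum, hP1, hident]
    ring
  -- applying Q to a vector
  have hQapp : ∀ (v : S → ℝ) (x : S),
      (∑ y, Q x y * v y) = c x * (∑ y, P x y * v y) + (1 - c x) * v x := by
    intro v x
    simp only [hQ, add_mul, Finset.sum_add_distrib, mul_assoc, ← Finset.mul_sum]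
    congr 1
    congr 1
    simp [ite_mul]
  -- g n ≤ f n
  have hgf : ∀ n x, reachAux Q t n x ≤ reachAux P t n x := by
    intro n
    induction n with
    | zero => intro x; simp [reachAux]
    | succ n ih =>
      intro x
      simp only [reachAux]
      split
      · norm_num
      · rw [hQapp]
        have h1 : (∑ y, P x y * reachAux Q t n y) ≤ ∑ y, P x y * reachAux P t n y :=
          Finset.sum_le_sum fun y _ => mul_le_mul_of_nonneg_left (ih y) (hP0 x y)
        have h2 : reachAux Q t n x ≤ ∑ y, P x y * reachAux P t n y := by
          calc reachAux Q t n x ≤ reachAux P t n x := ih x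
            _ ≤ reachAux P t (n+1) x := reachAux_mono P t hP0 n x
            _ = ∑ y, P x y * reachAux P t n y := by simp only [reachAux]; rw [if_neg]; assumption
        calc c x * (∑ y, P x y * reachAux Q t n y) + (1 - c x) * reachAux Q t n x
            ≤ c x * (∑ y, P x y * reachAux P t n y) +
              (1 - c x) * (∑ y, P x y * reachAux P t n y) := by
              gcongr
              · exact (hc0 x).le
              · linarith [hc1 x]
          _ = ∑ y, P x y * reachAux P t n y := by ring
  -- L := ReachProb Q is a fixed point of P-step
  have hLfix : ∀ x, x ≠ t → (∑ y, P x y * ReachProb Q t y) = ReachProb Q t x := by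
    intro x hx
    have := ReachProb_fixed Q t hQ0 hQ1 x
    rw [if_neg hx, hQapp] at this
    have hc := (hc0 x).ne'
    nlinarith [hc0 x]
  -- f n ≤ L
  have hfL : ∀ n x, reachAux P t n x ≤ ReachProb Q t x := by
    intro n
    induction n with
    | zero =>
      intro x
      have h0 : reachAux Q t 0 x ≤ ReachProb Q t x := ReachProb_le_aux Q t hQ0 hQ1 0 x
      simpa [reachAux] using h0
    | succ n ih =>
      intro x
      by_cases hx : x = t
      · simp only [reachAux, if_pos hx]
        have h0 : reachAux Q t 0 x ≤ ReachProb Q t x := ReachProb_le_aux Q t hQ0 hQ1 0 x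
        simpa [reachAux, if_pos hx] using h0
      · simp only [reachAux, if_neg hx]
        rw [← hLfix x hx]
        exact Finset.sum_le_sum fun y _ => mul_le_mul_of_nonneg_left (ih y) (hP0 x y)
  intro s
  apply le_antisymm
  · exact ciSup_le fun n => hfL n s
  · exact ciSup_le fun n => (hgf n s).trans (ReachProb_le_aux P t hP0 hP1 n s)

/-- Conditioning a blind-MDP policy `τ` on each observation yields a memoryless
POMDP policy with the same reachability probability from every state. -/
theorem blind_to_pomdp_policy
    {S A Z : Type*} [Fintype S] [Fintype A] [Fintype Z]
    [DecidableEq S] [DecidableEq Z]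
    [Nonempty S] [Nonempty A] [Nonempty Z]
    (δ : S → A → S → ℝ)
    (hδ : ∀ s a, (∀ s', 0 ≤ δ s a s') ∧ (∑ s', δ s a s') = 1)
    (o : S → Z) (top : S)
    (τ : A × Z → ℝ) (hτ0 : ∀ p, 0 ≤ τ p) (hτ1 : (∑ p, τ p) = 1)
    (hpos : ∀ z, 0 < ∑ a, τ (a, z))
    (s : S) :
    ReachProb (fun s s' => ∑ a,
        (τ (a, o s) / ∑ a', τ (a', o s)) * δ s a s') top s =
    ReachProb (fun s s' => ∑ p : A × Z, τ p * blindTrans δ o s p s') top s := by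
  classical
  set c : S → ℝ := fun x => ∑ a, τ (a, o x) with hc
  have hc0 : ∀ x, 0 < c x := fun x => hpos (o x)
  have hc1 : ∀ x, c x ≤ 1 := by
    intro x
    have himg : (∑ a, τ (a, o x)) =
        ∑ p ∈ Finset.univ.image (fun a : A => (a, o x)), τ p := by
      rw [Finset.sum_image]
      intro a _ b _ h
      exact (Prod.mk.injEq _ _ _ _ ▸ h).1
    rw [hc]
    simp only
    rw [himg, ← hτ1]
    exact Finset.sum_le_sum_of_subset_of_nonneg (Finset.subset_univ _)
      (fun p _ _ => hτ0 p)
  have hP0 : ∀ x y, 0 ≤ ∑ a, (τ (a, o x) / ∑ a', τ (a', o x)) * δ x a y := by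
    intro x y
    exact Finset.sum_nonneg fun a _ =>
      mul_nonneg (div_nonneg (hτ0 _) (hc0 x).le) ((hδ x a).1 y)
  have hP1 : ∀ x, (∑ y, ∑ a, (τ (a, o x) / ∑ a', τ (a', o x)) * δ x a y) = 1 := by
    intro x
    rw [Finset.sum_comm]
    have : ∀ a, (∑ y, (τ (a, o x) / ∑ a', τ (a', o x)) * δ x a y)
        = τ (a, o x) / c x := by
      intro a
      rw [← Finset.mul_sum, (hδ x a).2, mul_one]
    simp only [this, ← Finset.sum_div]
    exact div_self (hc0 x).ne'
  have hQ : ∀ x y, (∑ p : A × Z, τ p * blindTrans δ o x p y) =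
      c x * (∑ a, (τ (a, o x) / ∑ a', τ (a', o x)) * δ x a y) +
      (1 - c x) * (if y = x then 1 else 0) := by
    intro x y
    have hsplit : ∀ a : A, (∑ z, τ (a, z) * blindTrans δ o x (a, z) y) =
        τ (a, o x) * δ x a y +
        ((∑ z, τ (a, z) * (if y = x then 1 else 0)) -
          τ (a, o x) * (if y = x then 1 else 0)) := by
      intro a
      have : ∀ z, τ (a, z) * blindTrans δ o x (a, z) y =
          τ (a, z) * (if y = x then 1 else 0) +
          (if o x = z then τ (a, z) * δ x a y -
            τ (a, z) * (if y = x then 1 else 0) else 0) := by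
        intro z
        simp only [blindTrans]
        split <;> ring
      simp only [this, Finset.sum_add_distrib, Finset.sum_ite_eq, Finset.mem_univ,
        if_pos]
      ring
    rw [Fintype.sum_prod_type]
    simp only [hsplit, Finset.sum_add_distrib, Finset.sum_sub_distrib]
    have h1 : (∑ a : A, ∑ z, τ (a, z) * (if y = x then (1:ℝ) else 0)) =
        (if y = x then (1:ℝ) else 0) := by
      simp only [← Finset.sum_mul, ← Fintype.sum_prod_type, hτ1, one_mul]
    have h2 : (∑ a : A, τ (a, o x) * (if y = x then (1:ℝ) else 0)) =
        c x * (if y = x then (1:ℝ) else 0) := by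
      rw [hc, Finset.sum_mul]
    have h3 : c x * (∑ a, (τ (a, o x) / ∑ a', τ (a', o x)) * δ x a y) =
        ∑ a, τ (a, o x) * δ x a y := by
      rw [Finset.mul_sum]
      refine Finset.sum_congr rfl fun a _ => ?_
      rw [← mul_assoc, mul_div_cancel₀ _ (hc0 x).ne']
    rw [h1, h2, h3]
    ring
  exact reach_blend _ _ top c hP0 hP1 hc0 hc1 hQ s
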